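/- Let Q be the Markov kernel on ℝ defined by Q(x,·) = N(αx + c, v) with constants |α| < 1, c ∈ ℝ, v > 0. Then the Gaussian measure μ = N( c/(1−α) , v/(1−α²) ) is invariant for Q, i.e. ∫ Q(x,B) μ(dx) = μ(B) for every Borel set B ⊂ ℝ. In particular, for α = e^{−γT}, c = ∫_0^T e^{−γu}S(T−u)du and v = σ²(1−e^{−2γT})/(2γ) (with γ, σ > 0 and S bounded measurable T-periodic), the invariant probability is μ = N( M(0) , σ²/(2γ) ), where M(0) = ∫_0^∞ e^{−γu}S(−u)du. -/

import Mathlib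

open MeasureTheory ProbabilityTheory Set intervalIntegral

lemma gauss_prod_id (m α c V v : ℝ) (hV : 0 < V) (hv : 0 < v) (x y : ℝ) :
    gaussianPDFReal m V.toNNReal x * gaussianPDFReal (α*x+c) v.toNNReal y
      = gaussianPDFReal ((V*v/(v+α^2*V))*(m/V + α*(y-c)/v)) (V*v/(v+α^2*V)).toNNReal x
        * gaussianPDFReal (α*m+c) (v+α^2*V).toNNReal y := by
  have hvv : 0 < v + α^2*V := by positivity
  have hW : 0 < V*v/(v+α^2*V) := by positivity
  simp only [gaussianPDFReal, Real.coe_toNNReal _ hV.le, Real.coe_toNNReal _ hv.le,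
    Real.coe_toNNReal _ hW.le, Real.coe_toNNReal _ hvv.le]
  rw [mul_mul_mul_comm, mul_mul_mul_comm ((√(2*Real.pi*(V*v/(v+α^2*V))))⁻¹),
    ← Real.exp_add, ← Real.exp_add]
  congr 1
  · rw [← mul_inv, ← mul_inv, ← Real.sqrt_mul (by positivity), ← Real.sqrt_mul (by positivity)]
    congr 2
    field_simp
  · congr 1
    field_simp
    ring

lemma gauss_conv (m α c V v : ℝ) (hV : 0 < V) (hv : 0 < v) :
    Measure.bind (gaussianReal m V.toNNReal) (fun x => gaussianReal (α*x+c) v.toNNReal)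
      = gaussianReal (α*m+c) (v+α^2*V).toNNReal := by
  have hvv : (0:ℝ) < v + α^2*V := by positivity
  have hW : (0:ℝ) < V*v/(v+α^2*V) := by positivity
  have hV' : V.toNNReal ≠ 0 := by simp [Real.toNNReal_eq_zero, not_le, hV]
  have hv' : v.toNNReal ≠ 0 := by simp [Real.toNNReal_eq_zero, not_le, hv]
  have hvv' : (v+α^2*V).toNNReal ≠ 0 := by simp [Real.toNNReal_eq_zero, not_le, hvv]
  have hW' : ∀ _:ℝ, (V*v/(v+α^2*V)).toNNReal ≠ 0 := fun _ => by
    simp [Real.toNNReal_eq_zero, not_le, hW]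
  have hjm : Measurable (fun p : ℝ×ℝ => gaussianPDF (α*p.1+c) v.toNNReal p.2) := by
    unfold gaussianPDF gaussianPDFReal
    fun_prop
  ext s hs
  have hker : Measurable (fun x => gaussianReal (α*x+c) v.toNNReal) := by
    rw [Measure.measurable_measure]
    intro t ht
    simp_rw [gaussianReal_apply _ hv' t]
    exact hjm.lintegral_prod_right'
  rw [Measure.bind_apply hs hker.aemeasurable]
  simp_rw [gaussianReal_apply _ hv' s]
  rw [gaussianReal_of_var_ne_zero _ hV',
    lintegral_withDensity_eq_lintegral_mul _ (measurable_gaussianPDF _ _)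
      (by exact hjm.lintegral_prod_right')]
  simp only [Pi.mul_apply]
  have h1 : ∀ x, gaussianPDF m V.toNNReal x * ∫⁻ y in s, gaussianPDF (α*x+c) v.toNNReal y
      = ∫⁻ y in s, gaussianPDF m V.toNNReal x * gaussianPDF (α*x+c) v.toNNReal y := fun x => by
    rw [lintegral_const_mul _ (measurable_gaussianPDF _ _)]
  simp_rw [h1]
  rw [lintegral_lintegral_swap]
  swap
  · exact (((measurable_gaussianPDF m V.toNNReal).comp measurable_fst).mul hjm).aemeasurable
  have h2 : ∀ y, ∫⁻ x, gaussianPDF m V.toNNReal x * gaussianPDF (α*x+c) v.toNNReal y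
      = gaussianPDF (α*m+c) (v+α^2*V).toNNReal y := by
    intro y
    have : ∀ x, gaussianPDF m V.toNNReal x * gaussianPDF (α*x+c) v.toNNReal y
        = gaussianPDF ((V*v/(v+α^2*V))*(m/V + α*(y-c)/v)) (V*v/(v+α^2*V)).toNNReal x
          * gaussianPDF (α*m+c) (v+α^2*V).toNNReal y := by
      intro x
      simp only [gaussianPDF]
      rw [← ENNReal.ofReal_mul (gaussianPDFReal_nonneg _ _ _),
        ← ENNReal.ofReal_mul (gaussianPDFReal_nonneg _ _ _),
        gauss_prod_id m α c V v hV hv x y]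
    simp_rw [this]
    rw [lintegral_mul_const _ (measurable_gaussianPDF _ _),
      lintegral_gaussianPDF_eq_one _ (hW' y), one_mul]
  simp_rw [h2]
  rw [gaussianReal_apply _ hvv' s]

lemma shiftIoi (f : ℝ → ℝ) (T : ℝ) :
    ∫ u in Ioi T, f u = ∫ u in Ioi (0:ℝ), f (u+T) := by
  rw [← MeasureTheory.integral_indicator measurableSet_Ioi,
    ← MeasureTheory.integral_indicator measurableSet_Ioi,
    ← integral_add_right_eq_self (fun x => (Ioi T).indicator f x) T]
  congr 1
  ext x
  simp [Set.indicator_apply, lt_add_iff_pos_left]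


/-- The Gaussian measure `μ = N(c/(1−α), v/(1−α²))` is invariant for the kernel
`Q(x,·) = N(αx + c, v)` with `|α| < 1`, `v > 0`.  In particular, for `α = e^{−γT}`,
`c = ∫_0^T e^{−γu} S(T−u) du` and `v = σ²(1−e^{−2γT})/(2γ)` (with `S` bounded measurable
`T`-periodic), the invariant probability is `N(M(0), σ²/(2γ))` with
`M(0) = ∫_0^∞ e^{−γu} S(−u) du`. -/
theorem statement7
    (α c v : ℝ) (hα : |α| < 1) (hv : 0 < v) :
    (Measure.bind (gaussianReal (c / (1 - α)) (v / (1 - α ^ 2)).toNNReal)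
        (fun x => gaussianReal (α * x + c) v.toNNReal)
      = gaussianReal (c / (1 - α)) (v / (1 - α ^ 2)).toNNReal)
    ∧ (∀ (γ σ T : ℝ) (S : ℝ → ℝ), 0 < γ → 0 < σ → 0 < T →
        Measurable S → (∃ CS, ∀ t, |S t| ≤ CS) → (∀ t, S (t + T) = S t) →
        α = Real.exp (-γ * T) →
        c = ∫ u in (0:ℝ)..T, Real.exp (-γ * u) * S (T - u) →
        v = σ ^ 2 * (1 - Real.exp (-2 * γ * T)) / (2 * γ) →
        Measure.bind (gaussianReal (∫ u in Set.Ioi (0:ℝ), Real.exp (-γ * u) * S (-u))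
            (σ ^ 2 / (2 * γ)).toNNReal)
          (fun x => gaussianReal (α * x + c) v.toNNReal)
        = gaussianReal (∫ u in Set.Ioi (0:ℝ), Real.exp (-γ * u) * S (-u))
            (σ ^ 2 / (2 * γ)).toNNReal) := by
  obtain ⟨hα1, hα2⟩ := abs_lt.mp hα
  have h1 : (0:ℝ) < 1 - α := by linarith
  have h2 : (0:ℝ) < 1 - α^2 := by nlinarith
  constructor
  · rw [gauss_conv (c/(1-α)) α c (v/(1-α^2)) v (by positivity) hv]
    congr 1
    · field_simp
      ring
    · congr 1
      field_simp
      ring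
  · rintro γ σ T S hγ hσ hT hSm ⟨CS, hCS⟩ hper hαdef hc hvdef
    have hV : (0:ℝ) < σ^2/(2*γ) := by positivity
    rw [gauss_conv _ α c (σ^2/(2*γ)) v hV hv]
    have hvar : v + α^2*(σ^2/(2*γ)) = σ^2/(2*γ) := by
      have he : α^2 = Real.exp (-2*γ*T) := by
        rw [hαdef, sq, ← Real.exp_add]
        ring_nf
      rw [hvdef, he]
      field_simp
      ring
    have hint : ∀ a:ℝ, IntegrableOn (fun u => Real.exp (-γ*u) * S (T-u)) (Ioi a) := by
      intro a
      refine Integrable.mono' ((exp_neg_integrableOn_Ioi a hγ).const_mul CS) ?_ ?_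
      · exact ((Real.measurable_exp.comp (measurable_id.const_mul _)).mul
          (hSm.comp (measurable_const.sub measurable_id))).aestronglyMeasurable
      · refine ae_of_all _ fun u => ?_
        rw [Real.norm_eq_abs, abs_mul, Real.abs_exp]
        calc Real.exp (-γ*u) * |S (T-u)| ≤ Real.exp (-γ*u) * CS :=
              mul_le_mul_of_nonneg_left (hCS _) (Real.exp_pos _).le
          _ = CS * Real.exp (-γ*u) := by ring
    have hSper : ∀ u : ℝ, S (T - u) = S (-u) := fun u => by
      have := hper (-u)
      rwa [show -u + T = T - u by ring] at this
    have hM0 : (∫ u in Ioi (0:ℝ), Real.exp (-γ*u) * S (-u))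
        = ∫ u in Ioi (0:ℝ), Real.exp (-γ*u) * S (T-u) := by
      congr 1
      ext u
      rw [hSper]
    have hkey : α * (∫ u in Ioi (0:ℝ), Real.exp (-γ*u) * S (-u))
        = ∫ u in Ioi T, Real.exp (-γ*u) * S (T-u) := by
      rw [shiftIoi (fun u => Real.exp (-γ*u) * S (T-u)) T, ← MeasureTheory.integral_const_mul]
      congr 1
      ext u
      rw [hαdef, show T-(u+T) = -u by ring, show -γ*(u+T) = -γ*T + -γ*u by ring,
        Real.exp_add]
      ring
    have hc' : c = ∫ u in Ioc (0:ℝ) T, Real.exp (-γ*u) * S (T-u) := by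
      rw [hc, intervalIntegral.integral_of_le hT.le]
    have hmean : α * (∫ u in Ioi (0:ℝ), Real.exp (-γ*u) * S (-u)) + c
        = ∫ u in Ioi (0:ℝ), Real.exp (-γ*u) * S (-u) := by
      rw [hkey, hc', hM0, ← Ioc_union_Ioi_eq_Ioi hT.le,
        setIntegral_union (Ioc_disjoint_Ioi le_rfl) measurableSet_Ioi
          ((hint 0).mono_set Ioc_subset_Ioi_self) (hint T)]
      ring
    rw [hmean, hvar]
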